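/- If R : ℝⁿ → ℝ is convex, p ∈ ∂R(η), and D(ξ, η) = R(ξ) − R(η) − ⟨p, ξ − η⟩ is the Bregman divergence, then for any minimizer x* of ξ ↦ ½‖Aξ − y‖² + α D(ξ, η) with α > 0, the vector p' := p − (1/α) Aᵀ(Ax* − y) is a subgradient of R at x*. -/
import Mathlib


open Matrix Finset

/-- If x* minimizes ξ ↦ ½‖Aξ − y‖² + α·D(ξ,η), where D is the Bregman
divergence of the convex function R with subgradient p at η, then
p' = p − (1/α)Aᵀ(Ax* − y) is a subgradient of R at x*. -/
theorem bregman_update_subgradient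
    (m n : ℕ) (A : Matrix (Fin m) (Fin n) ℝ) (y : Fin m → ℝ) (α : ℝ) (hα : 0 < α)
    (R : (Fin n → ℝ) → ℝ) (hR : ConvexOn ℝ Set.univ R)
    (η p : Fin n → ℝ)
    (hp : ∀ ζ : Fin n → ℝ, R η + p ⬝ᵥ (ζ - η) ≤ R ζ)
    (F : (Fin n → ℝ) → ℝ)
    (hF : ∀ ξ, F ξ = (1/2) * ∑ j, (A.mulVec ξ j - y j)^2
          + α * (R ξ - R η - p ⬝ᵥ (ξ - η)))
    (xstar : Fin n → ℝ) (hmin : ∀ ξ, F xstar ≤ F ξ) :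
    ∀ ζ : Fin n → ℝ,
      R xstar + (p - (1/α) • Aᵀ.mulVec (A.mulVec xstar - y)) ⬝ᵥ (ζ - xstar) ≤ R ζ := by
  intro ζ
  set v : Fin n → ℝ := ζ - xstar with hv
  set w : Fin m → ℝ := A.mulVec xstar - y with hw
  set b : ℝ := w ⬝ᵥ A.mulVec v with hb
  set c : ℝ := (1/2) * ∑ j, (A.mulVec v j)^2 with hc
  have hc0 : 0 ≤ c := by
    apply mul_nonneg (by norm_num)
    exact Finset.sum_nonneg fun j _ => sq_nonneg _
  -- key inequality for each t ∈ (0,1]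
  have key : ∀ t : ℝ, 0 < t → t ≤ 1 →
      α * (R xstar - R ζ + p ⬝ᵥ v) ≤ b + t * c := by
    intro t ht0 ht1
    have hmin' := hmin (xstar + t • v)
    rw [hF, hF] at hmin'
    -- convexity bound
    have hcvx : R (xstar + t • v) ≤ (1 - t) * R xstar + t * R ζ := by
      have h := hR.2 (Set.mem_univ xstar) (Set.mem_univ ζ)
        (by linarith : (0:ℝ) ≤ 1 - t) (le_of_lt ht0) (by ring)
      have : (1 - t) • xstar + t • ζ = xstar + t • v := by
        funext i
        simp [hv, smul_eq_mul]
        ring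
      rw [this] at h
      simpa using h
    -- quadratic expansion
    have hquad : ∑ j, (A.mulVec (xstar + t • v) j - y j)^2
        = ∑ j, (w j)^2 + 2 * t * b + t^2 * ∑ j, (A.mulVec v j)^2 := by
      have hj : ∀ j, (A.mulVec (xstar + t • v) j - y j)^2
          = (w j)^2 + 2 * t * (w j * A.mulVec v j) + t^2 * (A.mulVec v j)^2 := by
        intro j
        have : A.mulVec (xstar + t • v) j = A.mulVec xstar j + t * A.mulVec v j := by
          rw [Matrix.mulVec_add, Matrix.mulVec_smul]
          simp [smul_eq_mul]
        rw [this]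
        simp only [hw, Pi.sub_apply]
        ring
      calc ∑ j, (A.mulVec (xstar + t • v) j - y j)^2
          = ∑ j, ((w j)^2 + 2 * t * (w j * A.mulVec v j) + t^2 * (A.mulVec v j)^2) := by
            exact Finset.sum_congr rfl fun j _ => hj j
        _ = ∑ j, (w j)^2 + 2 * t * b + t^2 * ∑ j, (A.mulVec v j)^2 := by
            simp only [Finset.sum_add_distrib, Finset.mul_sum, hb, dotProduct]
    -- dot product expansion
    have hdot : p ⬝ᵥ (xstar + t • v - η) = p ⬝ᵥ (xstar - η) + t * (p ⬝ᵥ v) := by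
      have : xstar + t • v - η = (xstar - η) + t • v := by
        funext i; simp; ring
      rw [this, dotProduct_add, dotProduct_smul, smul_eq_mul]
    -- also: ∑ j, (A.mulVec xstar j - y j)^2 = ∑ j, (w j)^2
    have hwsum : ∑ j, (A.mulVec xstar j - y j)^2 = ∑ j, (w j)^2 := by
      apply Finset.sum_congr rfl; intro j _
      simp [hw]
    rw [hquad, hdot, hwsum] at hmin'
    -- now use convexity bound inside hmin' and divide by t
    have h2 : α * (R (xstar + t • v)) ≤ α * ((1 - t) * R xstar + t * R ζ) :=
      mul_le_mul_of_nonneg_left hcvx (le_of_lt hα)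
    have hfin : α * t * (R xstar - R ζ + p ⬝ᵥ v) ≤ t * b + t^2 * c := by
      nlinarith [hmin', h2]
    have h3 : t * (α * (R xstar - R ζ + p ⬝ᵥ v)) ≤ t * (b + t * c) := by
      nlinarith [hfin]
    exact le_of_mul_le_mul_left h3 ht0
  -- take t → 0 via ε argument
  have hmain : α * (R xstar - R ζ + p ⬝ᵥ v) ≤ b := by
    apply le_of_forall_pos_le_add
    intro ε hε
    set t : ℝ := min 1 (ε / (c + 1)) with htdef
    have ht0 : 0 < t := lt_min one_pos (div_pos hε (by linarith))
    have ht1 : t ≤ 1 := min_le_left _ _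
    have htc : t * c ≤ ε := by
      have h1 : t ≤ ε / (c + 1) := min_le_right _ _
      have : t * c ≤ (ε / (c + 1)) * c :=
        mul_le_mul_of_nonneg_right h1 hc0
      calc t * c ≤ (ε / (c + 1)) * c := this
        _ ≤ ε := by
          rw [div_mul_eq_mul_div, div_le_iff₀ (by linarith : (0:ℝ) < c + 1)]
          nlinarith
    calc α * (R xstar - R ζ + p ⬝ᵥ v) ≤ b + t * c := key t ht0 ht1
      _ ≤ b + ε := by linarith
  -- transpose identity
  have hbt : Aᵀ.mulVec w ⬝ᵥ v = b := by
    rw [hb, Matrix.mulVec_transpose, ← Matrix.dotProduct_mulVec]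
  -- finish
  have hexp : (p - (1/α) • Aᵀ.mulVec w) ⬝ᵥ v = p ⬝ᵥ v - (1/α) * b := by
    rw [sub_dotProduct, smul_dotProduct, smul_eq_mul, hbt]
  rw [hexp]
  have h1 : R xstar - R ζ + p ⬝ᵥ v ≤ (1/α) * b := by
    rw [one_div, ← div_eq_inv_mul, le_div_iff₀ hα]
    nlinarith [hmain]
  linarith
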